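/- arXiv:2503.13398 — 3 statements merged into one kernel-verified Lean document; each statement's English description precedes it below -/
import Mathlib

section
/- In the graph G constructed from a (3,2)-set-cover instance (U,𝒮,τ) as in the reduction, if 𝒮 has a cover of U of size at most τ, then G contains a collection of at least 2n + m − τ pairwise edge-disjoint directed 3-paths. -/
/-- Vertices of the graph built from a (3,2)-set-cover instance:
`Sum.inl (j, a)` is the vertex u_{j,x_a} (for x_a ∈ S_j), `Sum.inr (Sum.inl j)`
is the sink u_j of the gadget of S_j, and `Sum.inr (Sum.inr (i, t))` is the
vertex v_{i,t+1} (t : Fin 4) of the gadget of the element x_i. -/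
abbrev SCVtx (n m : ℕ) := (Fin m × Fin n) ⊕ Fin m ⊕ (Fin n × Fin 4)

/-- Directed edges of the reduction graph: for each S_j = {x_p, x_q, x_r}
(p < q < r) the path u_{j,x_p} → u_{j,x_q} → u_{j,x_r} → u_j (consecutive
elements of S_j in increasing order, the maximum going to u_j); for each
element x_i the edges v_{i,1} → v_{i,3}, v_{i,3} → v_{i,4}, v_{i,2} → v_{i,4};
and the edges v_{i,4} → u_{j,x_i} for each set S_j containing x_i. -/
def SCEdge {n m : ℕ} (S : Fin m → Finset (Fin n)) :
    SCVtx n m → SCVtx n m → Prop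
  | Sum.inl (j, a), Sum.inl (j', b) =>
      j = j' ∧ a ∈ S j ∧ b ∈ S j ∧ a < b ∧ ∀ c ∈ S j, ¬(a < c ∧ c < b)
  | Sum.inl (j, a), Sum.inr (Sum.inl j') =>
      j = j' ∧ a ∈ S j ∧ ∀ c ∈ S j, c ≤ a
  | Sum.inr (Sum.inr (i, t)), Sum.inr (Sum.inr (i', t')) =>
      i = i' ∧ ((t = 0 ∧ t' = 2) ∨ (t = 2 ∧ t' = 3) ∨ (t = 1 ∧ t' = 3))
  | Sum.inr (Sum.inr (i, t)), Sum.inl (j, a) => a = i ∧ t = 3 ∧ i ∈ S j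
  | _, _ => False

/-- A directed path in the reduction graph, as its list of edges. -/
def SCPath {n m : ℕ} (S : Fin m → Finset (Fin n))
    (p : List (SCVtx n m × SCVtx n m)) : Prop :=
  (∀ e ∈ p, SCEdge S e.1 e.2) ∧ p.Chain' (fun e f => e.2 = f.1)

/-- A collection of pairwise edge-disjoint paths. -/
def SCEdgeDisjoint {n m : ℕ} (P : Finset (List (SCVtx n m × SCVtx n m))) : Prop :=
  ∀ p ∈ P, ∀ q ∈ P, p ≠ q → ∀ e ∈ p, e ∉ q

/-! Fix a cover `T` and assign to each element `x_i` a set `c i ∈ T` containing it; let `o i` be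
the other set containing `x_i`. Each element gadget carries two 3-paths,
`v_{i,1} → v_{i,3} → v_{i,4} → u_{o i, x_i}` and `v_{i,2} → v_{i,4} → u_{c i, x_i} → ·`, the last
edge being the edge of the gadget of `S_{c i}` leaving `u_{c i, x_i}`; and the gadget of every set
not of the form `c i` is itself a 3-path. These are edge-disjoint: the two paths of `x_i` leave
`v_{i,4}` towards different sets, and element paths use gadget edges of chosen sets only. At most
`|T| ≤ τ` sets are chosen, which leaves at least `2n + m − τ` paths. -/

open Finset

theorem Finset.orderEmbOfFin_not_between {α : Type*} [LinearOrder α] (s : Finset α) {d : ℕ}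
    (h : s.card = d) {k l : Fin d} (hkl : (l : ℕ) = k + 1) {c : α}
    (hc : c ∈ s) : ¬(s.orderEmbOfFin h k < c ∧ c < s.orderEmbOfFin h l) := by
  obtain ⟨i, rfl⟩ : c ∈ Set.range (s.orderEmbOfFin h) := by simpa using hc
  simp only [OrderEmbedding.lt_iff_lt, Fin.lt_def]
  omega

section Packing

variable {n m : ℕ} [DecidableEq (List (SCVtx n m × SCVtx n m))] {ι : Type*} {s : Finset ι}
  {f : ι → List (SCVtx n m × SCVtx n m)}

theorem scEdgeDisjoint_image (h : ∀ x ∈ s, ∀ y ∈ s, ∀ e ∈ f x, e ∈ f y → x = y) :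
    SCEdgeDisjoint (s.image f) := by
  simp only [SCEdgeDisjoint, mem_image]
  rintro _ ⟨x, hx, rfl⟩ _ ⟨y, hy, rfl⟩ hne e hex hey
  exact hne (congrArg f (h x hx y hy e hex hey))

theorem card_image_of_edge_mem_unique (hne : ∀ x ∈ s, f x ≠ [])
    (h : ∀ x ∈ s, ∀ y ∈ s, ∀ e ∈ f x, e ∈ f y → x = y) : (s.image f).card = s.card := by
  refine card_image_of_injOn fun x hx y hy hxy => ?_
  obtain ⟨e, he⟩ := List.exists_mem_of_ne_nil _ (hne x hx)
  exact h x hx y hy e he (hxy ▸ he)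

end Packing

section Reduction

variable {n m : ℕ} (S : Fin m → Finset (Fin n))

abbrev setVtx (j : Fin m) (a : Fin n) : SCVtx n m := Sum.inl (j, a)

abbrev sinkVtx (j : Fin m) : SCVtx n m := Sum.inr (Sum.inl j)

abbrev elemVtx (i : Fin n) (t : Fin 4) : SCVtx n m := Sum.inr (Sum.inr (i, t))

def gadgetSucc (j : Fin m) (a : Fin n) : SCVtx n m :=
  if h : ((S j).filter (a < ·)).Nonempty then setVtx j (((S j).filter (a < ·)).min' h)
  else sinkVtx j

theorem scEdge_gadgetSucc {j : Fin m} {a : Fin n} (ha : a ∈ S j) :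
    SCEdge S (setVtx j a) (gadgetSucc S j a) := by
  unfold gadgetSucc
  split_ifs with h
  · have hb := mem_filter.mp (min'_mem _ h)
    refine ⟨rfl, ha, hb.1, hb.2, fun c hc ⟨hac, hcb⟩ => ?_⟩
    exact (min'_le _ c (mem_filter.mpr ⟨hc, hac⟩)).not_gt hcb
  · refine ⟨rfl, ha, fun c hc => not_lt.mp fun hac => h ⟨c, mem_filter.mpr ⟨hc, hac⟩⟩⟩

def otherPath (o : Fin n → Fin m) (i : Fin n) : List (SCVtx n m × SCVtx n m) :=
  [(elemVtx i 0, elemVtx i 2), (elemVtx i 2, elemVtx i 3), (elemVtx i 3, setVtx (o i) i)]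

def coverPath (c : Fin n → Fin m) (i : Fin n) : List (SCVtx n m × SCVtx n m) :=
  [(elemVtx i 1, elemVtx i 3), (elemVtx i 3, setVtx (c i) i),
    (setVtx (c i) i, gadgetSucc S (c i) i)]

def gadgetPath (j : Fin m) (hj : (S j).card = 3) : List (SCVtx n m × SCVtx n m) :=
  let e := (S j).orderEmbOfFin hj
  [(setVtx j (e 0), setVtx j (e 1)), (setVtx j (e 1), setVtx j (e 2)), (setVtx j (e 2), sinkVtx j)]

theorem scPath_three {a b c d : SCVtx n m} (hab : SCEdge S a b) (hbc : SCEdge S b c)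
    (hcd : SCEdge S c d) : SCPath S [(a, b), (b, c), (c, d)] := by
  refine ⟨?_, .cons_cons rfl (.cons_cons rfl (.singleton _))⟩
  simp only [List.mem_cons, List.not_mem_nil, or_false]
  rintro e (rfl | rfl | rfl) <;> assumption

theorem scPath_otherPath {o : Fin n → Fin m} {i : Fin n} (hi : i ∈ S (o i)) :
    SCPath S (otherPath o i) :=
  scPath_three S ⟨rfl, by simp⟩ ⟨rfl, by simp⟩ ⟨rfl, rfl, hi⟩

theorem scPath_coverPath {c : Fin n → Fin m} {i : Fin n} (hi : i ∈ S (c i)) :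
    SCPath S (coverPath S c i) :=
  scPath_three S ⟨rfl, by simp⟩ ⟨rfl, rfl, hi⟩ (scEdge_gadgetSucc S hi)

theorem scPath_gadgetPath {j : Fin m} (hj : (S j).card = 3) : SCPath S (gadgetPath S j hj) := by
  have e_mono := ((S j).orderEmbOfFin hj).strictMono
  refine scPath_three S ⟨rfl, by simp, by simp, e_mono (by decide), fun c hc => ?_⟩
    ⟨rfl, by simp, by simp, e_mono (by decide), fun c hc => ?_⟩
    ⟨rfl, by simp, fun c hc => ?_⟩
  · exact (S j).orderEmbOfFin_not_between hj (k := 0) (l := 1) rfl hc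
  · exact (S j).orderEmbOfFin_not_between hj (k := 1) (l := 2) rfl hc
  · rw [show (2 : Fin 3) = ⟨3 - 1, by norm_num⟩ from rfl, orderEmbOfFin_last hj (by norm_num)]
    exact le_max' _ c hc

def packing (c o : Fin n → Fin m) (hS : ∀ j, (S j).card = 3) :
    Fin n ⊕ Fin n ⊕ Fin m → List (SCVtx n m × SCVtx n m)
  | .inl i => otherPath o i
  | .inr (.inl i) => coverPath S c i
  | .inr (.inr j) => gadgetPath S j (hS j)

def packingIndex (c : Fin n → Fin m) : Finset (Fin n ⊕ Fin n ⊕ Fin m) :=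
  univ.disjSum (univ.disjSum (univ.filter fun j => ∀ i, c i ≠ j))

theorem eq_of_mem_packing {c o : Fin n → Fin m} (hoc : ∀ i, o i ≠ c i)
    (hS : ∀ j, (S j).card = 3) :
    ∀ x ∈ packingIndex c, ∀ y ∈ packingIndex c, ∀ e ∈ packing S c o hS x,
      e ∈ packing S c o hS y → x = y := by
  intro x hx y hy e hex hey
  rcases x with i | i | j <;> rcases y with i' | i' | j' <;>
    simp only [packing, otherPath, coverPath, gadgetPath, List.mem_cons, List.not_mem_nil,
      or_false] at hex hey <;>
    simp only [packingIndex, inl_mem_disjSum, inr_mem_disjSum, mem_filter] at hx hy <;>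
    grind

theorem length_packing (c o : Fin n → Fin m) (hS : ∀ j, (S j).card = 3)
    (x : Fin n ⊕ Fin n ⊕ Fin m) : (packing S c o hS x).length = 3 := by
  rcases x with _ | _ | _ <;> rfl

theorem scPath_packing {c o : Fin n → Fin m} (hci : ∀ i, i ∈ S (c i)) (hoi : ∀ i, i ∈ S (o i))
    (hS : ∀ j, (S j).card = 3) (x : Fin n ⊕ Fin n ⊕ Fin m) : SCPath S (packing S c o hS x) := by
  rcases x with i | i | j
  exacts [scPath_otherPath S (hoi i), scPath_coverPath S (hci i), scPath_gadgetPath S (hS j)]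

end Reduction

theorem stmt_11_general {n m : ℕ} (S : Fin m → Finset (Fin n)) (τ : ℕ)
    (hcard : ∀ j, (S j).card = 3)
    (helem : ∀ i : Fin n, (Finset.univ.filter (fun j => i ∈ S j)).card = 2)
    (hcover : ∃ T : Finset (Fin m), T.card ≤ τ ∧ ∀ i : Fin n, ∃ j ∈ T, i ∈ S j) :
    ∃ P : Finset (List (SCVtx n m × SCVtx n m)),
      (∀ p ∈ P, SCPath S p ∧ p.length = 3) ∧ SCEdgeDisjoint P ∧
      2 * n + m - τ ≤ P.card := by
  classical
  obtain ⟨T, hT, hcov⟩ := hcover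
  choose c hcT hci using hcov
  choose o ho hoc using fun i => exists_mem_ne (by rw [helem i]; norm_num) (c i)
  have hoi : ∀ i, i ∈ S (o i) := fun i => (mem_filter.mp (ho i)).2
  have hunique := eq_of_mem_packing S hoc hcard
  refine ⟨(packingIndex c).image (packing S c o hcard), ?_, scEdgeDisjoint_image hunique, ?_⟩
  · simp only [mem_image]
    rintro _ ⟨x, -, rfl⟩
    exact ⟨scPath_packing S hci hoi hcard x, length_packing S c o hcard x⟩
  · have hfree : univ \ T ⊆ univ.filter fun j => ∀ i, c i ≠ j := fun j hj =>
      mem_filter.mpr ⟨mem_univ j, fun i hij => (mem_sdiff.mp hj).2 (hij ▸ hcT i)⟩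
    have hne : ∀ x ∈ packingIndex c, packing S c o hcard x ≠ [] := fun x _ =>
      List.ne_nil_of_length_pos (by rw [length_packing]; norm_num)
    have hfree_card := card_le_card hfree
    rw [card_image_of_edge_mem_unique hne hunique, packingIndex, card_disjSum, card_disjSum]
    simp only [card_univ, Fintype.card_fin, card_sdiff_of_subset (subset_univ T)] at hfree_card ⊢
    omega

/-- if the (3,2)-set-cover instance (U, 𝒮, τ) has a cover of size
at most τ, then the reduction graph contains at least 2n + m − τ pairwise
edge-disjoint directed 3-paths. -/
theorem stmt_11 {n m : ℕ} (S : Fin m → Finset (Fin n)) (τ : ℕ) (hτ : τ ≤ m)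
    (hcard : ∀ j, (S j).card = 3)
    (helem : ∀ i : Fin n, (Finset.univ.filter (fun j => i ∈ S j)).card = 2)
    (hcover : ∃ T : Finset (Fin m), T.card ≤ τ ∧ ∀ i : Fin n, ∃ j ∈ T, i ∈ S j) :
    ∃ P : Finset (List (SCVtx n m × SCVtx n m)),
      (∀ p ∈ P, SCPath S p ∧ p.length = 3) ∧ SCEdgeDisjoint P ∧
      2 * n + m - τ ≤ P.card :=
  stmt_11_general S τ hcard helem hcover
end

section
/- In the graph G constructed from a (3,2)-set-cover instance (U,𝒮,τ), if G contains at least 2n + m − τ pairwise edge-disjoint directed 3-paths, then 𝒮 contains a subfamily of size at most τ covering U. -/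
/-! Every directed 3-path of the graph either is the whole gadget path
u_{j,x_p} → u_{j,x_q} → u_{j,x_r} → u_j of a set S_j, or uses an edge v_{i,4} → u_{j,x_i}.
Let F be the sets whose gadget path is one of the given paths, and call x_i saturated when
both sets containing it lie in F. A path through v_{i,4} → u_{j,x_i} with S_j ∈ F cannot go
on inside the gadget of S_j, whose edges are taken, so it begins with v_{i,1} → v_{i,3}; hence
edge-disjointness allows at most |F| + 2(n - s) + s paths, s being the number of saturated
elements. The m - |F| sets outside F, together with one set per saturated element, then cover
U with at most m - |F| + s ≤ τ sets. -/

open Sum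

theorem Finset.eq_triple_of_card_eq_three {α : Type*} [LinearOrder α] {s : Finset α}
    (hs : s.card = 3) {a b c : α} (ha : a ∈ s) (hb : b ∈ s) (hc : c ∈ s) (hab : a < b)
    (hbc : b < c) : s = {a, b, c} := by
  refine (Finset.eq_of_subset_of_card_le (by simp [Finset.insert_subset_iff, *]) ?_).symm
  rw [hs, Finset.card_insert_of_notMem (by simp [hab.ne, (hab.trans hbc).ne]),
    Finset.card_pair hbc.ne]

section

variable {n m : ℕ} {S : Fin m → Finset (Fin n)}

def scCrossEdge (i : Fin n) (j : Fin m) : SCVtx n m × SCVtx n m :=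
  (inr (inr (i, 3)), inl (j, i))

def scStartEdge (i : Fin n) : SCVtx n m × SCVtx n m :=
  (inr (inr (i, 0)), inr (inr (i, 2)))

def scGadgetPath (j : Fin m) (a b c : Fin n) : List (SCVtx n m × SCVtx n m) :=
  [(inl (j, a), inl (j, b)), (inl (j, b), inl (j, c)), (inl (j, c), inr (inl j))]

lemma SCEdge.eq_of_inl_left {j : Fin m} {a : Fin n} {y y' : SCVtx n m}
    (h : SCEdge S (inl (j, a)) y) (h' : SCEdge S (inl (j, a)) y') : y = y' := by
  rcases y with ⟨j₂, b⟩ | j₂ | ⟨i₂, t₂⟩ <;> rcases y' with ⟨j₃, b'⟩ | j₃ | ⟨i₃, t₃⟩ <;>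
    simp only [SCEdge] at h h'
  · obtain ⟨rfl, -, hb, hab, hbet⟩ := h
    obtain ⟨rfl, -, hb', hab', hbet'⟩ := h'
    rcases lt_trichotomy b b' with hlt | rfl | hlt
    · exact absurd ⟨hab, hlt⟩ (hbet' b hb)
    · rfl
    · exact absurd ⟨hab', hlt⟩ (hbet b' hb')
  · exact absurd h.2.2.2.1 (h'.2.2 b h.2.2.1).not_gt
  · exact absurd h'.2.2.2.1 (h.2.2 b' h'.2.2.1).not_gt
  · rw [← h.1, ← h'.1]

lemma SCEdge.eq_of_inr_inl_right {j : Fin m} {a a' : Fin n}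
    (h : SCEdge S (inl (j, a)) (inr (inl j))) (h' : SCEdge S (inl (j, a')) (inr (inl j))) :
    a = a' :=
  le_antisymm (h'.2.2 a h.2.1) (h.2.2 a' h'.2.1)

lemma SCPath.exists_vertices_of_length_eq_three {p : List (SCVtx n m × SCVtx n m)}
    (hp : SCPath S p) (hlen : p.length = 3) :
    ∃ x₁ x₂ x₃ x₄, p = [(x₁, x₂), (x₂, x₃), (x₃, x₄)] ∧
      SCEdge S x₁ x₂ ∧ SCEdge S x₂ x₃ ∧ SCEdge S x₃ x₄ := by
  obtain ⟨⟨x₁, y₁⟩, ⟨x₂, y₂⟩, ⟨x₃, y₃⟩, rfl⟩ := List.length_eq_three.1 hlen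
  obtain ⟨hedge, hchain⟩ := hp
  replace hchain : List.IsChain _ _ := hchain
  simp only [List.isChain_cons_cons, List.isChain_singleton, and_true] at hchain
  obtain ⟨rfl, rfl⟩ := hchain
  exact ⟨_, _, _, _, rfl, hedge (x₁, y₁) (by simp), hedge (y₁, y₂) (by simp),
    hedge (y₂, y₃) (by simp)⟩

lemma SCPath.eq_scGadgetPath_or_scCrossEdge_mem (hcard : ∀ j, (S j).card = 3)
    {p : List (SCVtx n m × SCVtx n m)} (hp : SCPath S p) (hlen : p.length = 3) :
    (∃ j a b c, S j = {a, b, c} ∧ p = scGadgetPath j a b c) ∨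
      ∃ i j, i ∈ S j ∧ scCrossEdge i j ∈ p := by
  obtain ⟨x₁, x₂, x₃, x₄, rfl, h₁, h₂, h₃⟩ := hp.exists_vertices_of_length_eq_three hlen
  rcases x₁ with ⟨j₁, a⟩ | j₁ | ⟨i₁, t₁⟩ <;> rcases x₂ with ⟨j₂, b⟩ | j₂ | ⟨i₂, t₂⟩ <;>
    rcases x₃ with ⟨j₃, c⟩ | j₃ | ⟨i₃, t₃⟩ <;> rcases x₄ with ⟨j₄, d⟩ | j₄ | ⟨i₄, t₄⟩ <;>
    simp only [SCEdge] at h₁ h₂ h₃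
  · obtain ⟨rfl, ha, hb, hab, -⟩ := h₁
    obtain ⟨rfl, -, hc, hbc, -⟩ := h₂
    obtain ⟨rfl, -, hd, hcd, -⟩ := h₃
    have := Finset.eq_triple_of_card_eq_three (hcard j₁) ha hb hc hab hbc ▸ hd
    simp only [Finset.mem_insert, Finset.mem_singleton] at this
    omega
  · obtain ⟨rfl, ha, hb, hab, -⟩ := h₁
    obtain ⟨rfl, -, hc, hbc, -⟩ := h₂
    obtain ⟨rfl, -, -⟩ := h₃
    exact .inl ⟨j₁, a, b, c, Finset.eq_triple_of_card_eq_three (hcard j₁) ha hb hc hab hbc, rfl⟩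
  iterate 2
    · obtain ⟨rfl, rfl, h⟩ := h₁
      exact .inr ⟨_, _, h, by simp [scCrossEdge]⟩
  iterate 2
    · obtain ⟨rfl, rfl, h⟩ := h₂
      exact .inr ⟨_, _, h, by simp [scCrossEdge]⟩
  · obtain ⟨rfl, rfl, h⟩ := h₃
    exact .inr ⟨_, _, h, by simp [scCrossEdge]⟩
  · omega

lemma SCPath.exists_mem_or_scStartEdge_mem_of_scCrossEdge_mem
    {p : List (SCVtx n m × SCVtx n m)} (hp : SCPath S p) (hlen : p.length = 3)
    {i : Fin n} {j : Fin m} (he : scCrossEdge i j ∈ p) :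
    (∃ y, (inl (j, i), y) ∈ p) ∨ scStartEdge i ∈ p := by
  obtain ⟨x₁, x₂, x₃, x₄, rfl, h₁, h₂, -⟩ := hp.exists_vertices_of_length_eq_three hlen
  simp only [scCrossEdge, List.mem_cons, Prod.mk.injEq, List.not_mem_nil, or_false] at he
  rcases he with ⟨rfl, rfl⟩ | ⟨rfl, rfl⟩ | ⟨rfl, rfl⟩
  · exact .inl ⟨x₃, by simp⟩
  · exact .inl ⟨x₄, by simp⟩
  · right
    rcases x₂ with ⟨j₂, b⟩ | j₂ | ⟨i₂, t₂⟩ <;> simp only [SCEdge] at h₂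
    rcases x₁ with ⟨j₁, a⟩ | j₁ | ⟨i₁, t₁⟩ <;> simp only [SCEdge] at h₁
    obtain ⟨rfl, rfl, rfl, rfl⟩ : i₁ = i ∧ i₂ = i ∧ t₁ = 0 ∧ t₂ = 2 := by omega
    simp [scStartEdge]

open scoped Classical in
noncomputable def scFullSets (S : Fin m → Finset (Fin n))
    (P : Finset (List (SCVtx n m × SCVtx n m))) : Finset (Fin m) :=
  Finset.univ.filter fun j => ∃ a b c, S j = {a, b, c} ∧ scGadgetPath j a b c ∈ P

open scoped Classical in
noncomputable def scSaturated (S : Fin m → Finset (Fin n)) (F : Finset (Fin m)) :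
    Finset (Fin n) :=
  Finset.univ.filter fun i => ∀ j, i ∈ S j → j ∈ F

/-- `inl j` stands for the unique edge entering the sink `u_j`, whose source `u_{j, max S_j}`
is only determined implicitly. -/
def SCUsesToken (p : List (SCVtx n m × SCVtx n m)) :
    Fin m ⊕ (SCVtx n m × SCVtx n m) → Prop
  | inl j => ∃ a, (inl (j, a), inr (inl j)) ∈ p
  | inr e => e ∈ p

open scoped Classical in
noncomputable def scTokens (S : Fin m → Finset (Fin n))
    (P : Finset (List (SCVtx n m × SCVtx n m))) : Finset (Fin m ⊕ (SCVtx n m × SCVtx n m)) :=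
  (scFullSets S P).disjSum
    (((scSaturated S (scFullSets S P))ᶜ.biUnion fun i =>
        (Finset.univ.filter (i ∈ S ·)).image (scCrossEdge i)) ∪
      (scSaturated S (scFullSets S P)).image scStartEdge)

variable {P : Finset (List (SCVtx n m × SCVtx n m))}

lemma SCEdgeDisjoint.eq_of_mem_of_mem (hdisj : SCEdgeDisjoint P) {p q e} (hp : p ∈ P)
    (hq : q ∈ P) (hep : e ∈ p) (heq : e ∈ q) : p = q := by
  by_contra hne
  exact hdisj p hp q hq hne e hep heq

lemma card_le_card_of_forall_scUsesToken (hP : ∀ p ∈ P, SCPath S p)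
    (hdisj : SCEdgeDisjoint P) {K : Finset (Fin m ⊕ (SCVtx n m × SCVtx n m))}
    (hK : ∀ p ∈ P, ∃ k ∈ K, SCUsesToken p k) : P.card ≤ K.card := by
  refine Finset.card_le_card_of_forall_subsingleton SCUsesToken hK ?_
  rintro (j | e) -
  · rintro p ⟨hp, a, hpa⟩ q ⟨hq, a', hqa'⟩
    obtain rfl := ((hP p hp).1 _ hpa).eq_of_inr_inl_right ((hP q hq).1 _ hqa')
    exact hdisj.eq_of_mem_of_mem hp hq hpa hqa'
  · rintro p ⟨hp, hpe⟩ q ⟨hq, hqe⟩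
    exact hdisj.eq_of_mem_of_mem hp hq hpe hqe

lemma exists_mem_scGadgetPath {j : Fin m} {a b c i : Fin n}
    (hi : i ∈ ({a, b, c} : Finset (Fin n))) :
    ∃ y, (inl (j, i), y) ∈ scGadgetPath j a b c := by
  simp only [Finset.mem_insert, Finset.mem_singleton] at hi
  rcases hi with rfl | rfl | rfl
  exacts [⟨inl (j, b), by simp [scGadgetPath]⟩, ⟨inl (j, c), by simp [scGadgetPath]⟩,
    ⟨inr (inl j), by simp [scGadgetPath]⟩]

lemma exists_scUsesToken (hcard : ∀ j, (S j).card = 3)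
    (hP : ∀ p ∈ P, SCPath S p ∧ p.length = 3) (hdisj : SCEdgeDisjoint P) :
    ∀ p ∈ P, ∃ k ∈ scTokens S P, SCUsesToken p k := by
  intro p hp
  rcases (hP p hp).1.eq_scGadgetPath_or_scCrossEdge_mem hcard (hP p hp).2 with
    ⟨j, a, b, c, hS, rfl⟩ | ⟨i, j, hi, he⟩
  · refine ⟨inl j, ?_, c, by simp [scGadgetPath]⟩
    simpa [scTokens, scFullSets] using ⟨a, b, c, hS, hp⟩
  by_cases hsat : i ∈ scSaturated S (scFullSets S P)
  swap
  · exact ⟨inr (scCrossEdge i j), Finset.inr_mem_disjSum.2 <| Finset.mem_union_left _ <|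
      Finset.mem_biUnion.2 ⟨i, Finset.mem_compl.2 hsat, by simpa using ⟨j, hi, rfl⟩⟩, he⟩
  obtain ⟨a, b, c, hS, hq⟩ : ∃ a b c, S j = {a, b, c} ∧ scGadgetPath j a b c ∈ P := by
    simpa [scFullSets] using (Finset.mem_filter.1 hsat).2 j hi
  rcases (hP p hp).1.exists_mem_or_scStartEdge_mem_of_scCrossEdge_mem (hP p hp).2 he with
    ⟨y, hy⟩ | hstart
  · exfalso
    obtain ⟨y', hy'⟩ := exists_mem_scGadgetPath (j := j) (hS ▸ hi)
    obtain rfl := ((hP p hp).1.1 _ hy).eq_of_inl_left ((hP _ hq).1.1 _ hy')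
    obtain rfl := hdisj.eq_of_mem_of_mem hp hq hy hy'
    simp [scGadgetPath, scCrossEdge] at he
  · exact ⟨inr (scStartEdge i), Finset.inr_mem_disjSum.2 <| Finset.mem_union_right _ <|
      Finset.mem_image_of_mem _ hsat, hstart⟩

lemma card_scTokens_le
    (helem : ∀ i : Fin n, (Finset.univ.filter (fun j => i ∈ S j)).card = 2) :
    (scTokens S P).card ≤ (scFullSets S P).card + 2 * (n - (scSaturated S (scFullSets S P)).card)
      + (scSaturated S (scFullSets S P)).card := by
  set F := scFullSets S P
  set Sat := scSaturated S F
  have hcross : (Satᶜ.biUnion fun i =>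
      (Finset.univ.filter (i ∈ S ·)).image (scCrossEdge i)).card ≤ 2 * (n - Sat.card) :=
    calc _ ≤ ∑ i ∈ Satᶜ, ((Finset.univ.filter (i ∈ S ·)).image (scCrossEdge i)).card :=
          Finset.card_biUnion_le
      _ ≤ ∑ _i ∈ Satᶜ, 2 := Finset.sum_le_sum fun i _ => (helem i) ▸ Finset.card_image_le
      _ = 2 * (n - Sat.card) := by simp [Finset.card_compl, mul_comm]
  rw [scTokens, Finset.card_disjSum, add_assoc]
  grw [Finset.card_union_le, hcross, Finset.card_image_le]

lemma exists_cover_card_le (hS : ∀ i, ∃ j, i ∈ S j) (F : Finset (Fin m)) :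
    ∃ T : Finset (Fin m), T.card ≤ m - F.card + (scSaturated S F).card ∧
      ∀ i : Fin n, ∃ j ∈ T, i ∈ S j := by
  choose g hg using hS
  refine ⟨Fᶜ ∪ (scSaturated S F).image g, ?_, fun i => ?_⟩
  · grw [Finset.card_union_le, Finset.card_compl, Fintype.card_fin, Finset.card_image_le]
  by_cases hi : i ∈ scSaturated S F
  · exact ⟨g i, Finset.mem_union_right _ (Finset.mem_image_of_mem g hi), hg i⟩
  · obtain ⟨j, hij, hj⟩ : ∃ j, i ∈ S j ∧ j ∉ F := by simpa [scSaturated] using hi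
    exact ⟨j, Finset.mem_union_left _ (Finset.mem_compl.2 hj), hij⟩

end

theorem stmt_12_general {n m : ℕ} (S : Fin m → Finset (Fin n)) (τ : ℕ)
    (hcard : ∀ j, (S j).card = 3)
    (helem : ∀ i : Fin n, (Finset.univ.filter (fun j => i ∈ S j)).card = 2)
    (hpaths : ∃ P : Finset (List (SCVtx n m × SCVtx n m)),
      (∀ p ∈ P, SCPath S p ∧ p.length = 3) ∧ SCEdgeDisjoint P ∧
      2 * n + m - τ ≤ P.card) :
    ∃ T : Finset (Fin m), T.card ≤ τ ∧ ∀ i : Fin n, ∃ j ∈ T, i ∈ S j := by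
  obtain ⟨P, hP, hdisj, hcount⟩ := hpaths
  have hPcard := (card_le_card_of_forall_scUsesToken (fun p hp => (hP p hp).1) hdisj
    (exists_scUsesToken hcard hP hdisj)).trans (card_scTokens_le helem)
  have hS : ∀ i, ∃ j, i ∈ S j := fun i =>
    let ⟨j, hj⟩ := Finset.card_pos.1 ((helem i).symm ▸ two_pos)
    ⟨j, (Finset.mem_filter.1 hj).2⟩
  obtain ⟨T, hT, hcover⟩ := exists_cover_card_le hS (scFullSets S P)
  have hF := Finset.card_le_univ (scFullSets S P)
  have hSat := Finset.card_le_univ (scSaturated S (scFullSets S P))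
  simp only [Fintype.card_fin] at hF hSat
  exact ⟨T, by omega, hcover⟩

/-- if the reduction graph contains at least 2n + m − τ pairwise
edge-disjoint directed 3-paths, then 𝒮 has a subfamily of size at most τ
covering U. -/
theorem stmt_12 {n m : ℕ} (S : Fin m → Finset (Fin n)) (τ : ℕ) (hτ : τ ≤ m)
    (hcard : ∀ j, (S j).card = 3)
    (helem : ∀ i : Fin n, (Finset.univ.filter (fun j => i ∈ S j)).card = 2)
    (hpaths : ∃ P : Finset (List (SCVtx n m × SCVtx n m)),
      (∀ p ∈ P, SCPath S p ∧ p.length = 3) ∧ SCEdgeDisjoint P ∧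
      2 * n + m - τ ≤ P.card) :
    ∃ T : Finset (Fin m), T.card ≤ τ ∧ ∀ i : Fin n, ∃ j ∈ T, i ∈ S j :=
  stmt_12_general S τ hcard helem hpaths
end

section
/- In the graph G of the (3,2)-set-cover reduction, any collection of pairwise edge-disjoint directed 3-paths has size at most 2n + m, since every directed 3-path in G starts at a vertex of the form v_{i,1}, v_{i,2}, or u_{j,x_p} (first vertex of a set-gadget path), and the edges leaving these starting points limit the count. -/
/-!
Every directed 3-path contains one of `2n + m` bottleneck edges: the edges `v_{i,3} → v_{i,4}`
and `v_{i,2} → v_{i,4}` of each element gadget, and in each set gadget the edge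
`u_{j,x_q} → u_{j,x_r}` into the vertex of its largest element. Look at the second vertex of
the path: a sink has no out-edge and `v_{i,1}`, `v_{i,2}` have no in-edge; at `v_{i,3}` the
next edge is a bottleneck, at `v_{i,4}` the previous one; at `u_{j,x}` the remaining two edges
stay inside the gadget of `S_j` and so pass through `u_{j,x_q} → u_{j,x_r}`. Pairwise
edge-disjoint paths use distinct bottleneck edges.
-/

theorem card_le_card_of_meets_subsingletons {α ι : Type*} [Fintype ι]
    (P : Finset (List α)) (B : ι → Set α) (hB : ∀ l, (B l).Subsingleton)
    (hdisj : ∀ p ∈ P, ∀ q ∈ P, p ≠ q → ∀ e ∈ p, e ∉ q)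
    (hmeet : ∀ p ∈ P, ∃ l, ∃ e ∈ p, e ∈ B l) :
    P.card ≤ Fintype.card ι := by
  refine Finset.card_le_card_of_forall_subsingleton (fun p l => ∃ e ∈ p, e ∈ B l)
    (fun p hp => by simpa using hmeet p hp) fun l _ => ?_
  rintro p ⟨hp, e, hep, heB⟩ q ⟨hq, e', heq, heB'⟩
  obtain rfl : e = e' := hB l heB heB'
  by_contra hpq
  exact hdisj p hp q hq hpq e hep heq

theorem Finset.le_of_card_eq_three {α : Type*} [LinearOrder α] {s : Finset α}
    (hs : s.card = 3) {a b c : α} (ha : a ∈ s) (hb : b ∈ s) (hc : c ∈ s)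
    (hab : a < b) (hbc : b < c) {d : α} (hd : d ∈ s) : d ≤ c := by
  have habc : ({a, b, c} : Finset α) = s :=
    Finset.eq_of_subset_of_card_le (by simp [Finset.insert_subset_iff, *])
      (by rw [hs, Finset.card_eq_three.2 ⟨a, b, c, hab.ne, (hab.trans hbc).ne, hbc.ne, rfl⟩])
  rw [← habc] at hd
  simp only [Finset.mem_insert, Finset.mem_singleton] at hd
  rcases hd with rfl | rfl | rfl <;> order

namespace SetCoverReduction

variable {n m : ℕ} (S : Fin m → Finset (Fin n))

abbrev u (j : Fin m) (a : Fin n) : SCVtx n m := Sum.inl (j, a)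

/-- `v i t` is the paper's `v_{i,t+1}`. -/
abbrev v (i : Fin n) (t : Fin 4) : SCVtx n m := Sum.inr (Sum.inr (i, t))

def IsTopEdge (j : Fin m) (e : SCVtx n m × SCVtx n m) : Prop :=
  ∃ a b, e = (u j a, u j b) ∧ SCEdge S (u j a) (u j b) ∧ ∀ c ∈ S j, c ≤ b

def bottleneck : Fin n ⊕ Fin n ⊕ Fin m → Set (SCVtx n m × SCVtx n m)
  | .inl i => {(v i 2, v i 3)}
  | .inr (.inl i) => {(v i 1, v i 3)}
  | .inr (.inr j) => {e | IsTopEdge S j e}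

theorem isTopEdge_subsingleton (j : Fin m) : {e | IsTopEdge S j e}.Subsingleton := by
  rintro _ ⟨a, b, rfl, ⟨-, ha, hb, hab, hgap⟩, hmax⟩
    _ ⟨a', b', rfl, ⟨-, ha', hb', hab', hgap'⟩, hmax'⟩
  obtain rfl : b = b' := le_antisymm (hmax' b hb) (hmax b' hb')
  obtain rfl : a = a' := by
    by_contra hne
    rcases lt_or_gt_of_ne hne with h | h
    · exact hgap a' ha' ⟨h, hab'⟩
    · exact hgap' a ha ⟨h, hab⟩
  rfl

theorem bottleneck_subsingleton (l : Fin n ⊕ Fin n ⊕ Fin m) :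
    (bottleneck S l).Subsingleton := by
  rcases l with i | i | j
  exacts [Set.subsingleton_singleton, Set.subsingleton_singleton, isTopEdge_subsingleton S j]

theorem exists_mem_bottleneck_of_scEdge_v3 {x : SCVtx n m} {i : Fin n}
    (h : SCEdge S x (v i 3)) :
    ∃ l, (x, v i 3) ∈ bottleneck S l := by
  rcases x with _ | _ | ⟨i', t⟩ <;> simp only [SCEdge] at h
  obtain ⟨rfl, ⟨-, h⟩ | ⟨rfl, -⟩ | ⟨rfl, -⟩⟩ := h
  · exact absurd h (by decide)
  · exact ⟨.inl i', rfl⟩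
  · exact ⟨.inr (.inl i'), rfl⟩

theorem not_scEdge_v0 (x : SCVtx n m) (i : Fin n) : ¬ SCEdge S x (v i 0) := by
  rcases x with _ | _ | ⟨i', t⟩ <;> simp [SCEdge]

theorem exists_mem_bottleneck_of_path (hcard : ∀ j, (S j).card = 3)
    {p : List (SCVtx n m × SCVtx n m)} (hp : SCPath S p) (hlen : p.length = 3) :
    ∃ l, ∃ e ∈ p, e ∈ bottleneck S l := by
  obtain ⟨hedge, hchain : List.IsChain _ _⟩ := hp
  obtain ⟨⟨x0, x1⟩, ⟨y1, x2⟩, ⟨y2, x3⟩, rfl⟩ := List.length_eq_three.mp hlen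
  simp only [List.isChain_cons_cons, List.isChain_singleton, and_true] at hchain
  obtain ⟨rfl, rfl⟩ := hchain
  have h1 : SCEdge S x0 x1 := hedge (x0, x1) (by simp)
  have h2 : SCEdge S x1 x2 := hedge (x1, x2) (by simp)
  have h3 : SCEdge S x2 x3 := hedge (x2, x3) (by simp)
  rcases x1 with ⟨j, b⟩ | j | ⟨i, t⟩
  · rcases x2 with ⟨j', c⟩ | j' | ⟨i', t'⟩
    · obtain ⟨rfl, hb, hc, hbc, -⟩ := id h2
      rcases x3 with ⟨j'', d⟩ | j'' | ⟨i'', t''⟩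
      · obtain ⟨rfl, -, hd, hcd, -⟩ := id h3
        exact ⟨.inr (.inr j), _, by simp, c, d, rfl, h3,
          fun e he => Finset.le_of_card_eq_three (hcard j) hb hc hd hbc hcd he⟩
      · exact ⟨.inr (.inr j), _, by simp, b, c, rfl, h2, h3.2.2⟩
      · simp [SCEdge] at h3
    · rcases x3 with _ | _ | _ <;> simp [SCEdge] at h3
    · simp [SCEdge] at h2
  · rcases x2 with _ | _ | _ <;> simp [SCEdge] at h2
  · rcases x2 with ⟨j', c⟩ | j' | ⟨i', t'⟩
    · obtain ⟨rfl, rfl, -⟩ := h2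
      obtain ⟨l, hl⟩ := exists_mem_bottleneck_of_scEdge_v3 S h1
      exact ⟨l, _, by simp, hl⟩
    · simp [SCEdge] at h2
    · obtain ⟨rfl, ⟨rfl, -⟩ | ⟨rfl, rfl⟩ | ⟨rfl, rfl⟩⟩ := id h2
      · exact absurd h1 (not_scEdge_v0 S x0 i)
      all_goals
        obtain ⟨l, hl⟩ := exists_mem_bottleneck_of_scEdge_v3 S h2
        exact ⟨l, _, by simp, hl⟩

end SetCoverReduction

theorem stmt_14_general {n m : ℕ} (S : Fin m → Finset (Fin n))
    (hcard : ∀ j, (S j).card = 3)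
    (P : Finset (List (SCVtx n m × SCVtx n m)))
    (hP : ∀ p ∈ P, SCPath S p ∧ p.length = 3)
    (hdisj : SCEdgeDisjoint P) :
    P.card ≤ 2 * n + m := by
  calc P.card ≤ Fintype.card (Fin n ⊕ Fin n ⊕ Fin m) :=
        card_le_card_of_meets_subsingletons P _
          (SetCoverReduction.bottleneck_subsingleton S) hdisj fun p hp =>
          SetCoverReduction.exists_mem_bottleneck_of_path S hcard (hP p hp).1 (hP p hp).2
    _ = 2 * n + m := by simp only [Fintype.card_sum, Fintype.card_fin]; ring

/-- in the reduction graph, every collection of pairwise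
edge-disjoint directed 3-paths has size at most 2n + m. -/
theorem stmt_14 {n m : ℕ} (S : Fin m → Finset (Fin n))
    (hcard : ∀ j, (S j).card = 3)
    (helem : ∀ i : Fin n, (Finset.univ.filter (fun j => i ∈ S j)).card = 2)
    (P : Finset (List (SCVtx n m × SCVtx n m)))
    (hP : ∀ p ∈ P, SCPath S p ∧ p.length = 3)
    (hdisj : SCEdgeDisjoint P) :
    P.card ≤ 2 * n + m :=
  stmt_14_general S hcard P hP hdisj
end
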